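/- In the q-shuffle algebra V on letters x, y, for every natural number n, q·(x ⋆ (yxx(yyxx)^n)) − q^{-1}·((yxx(yyxx)^n) ⋆ x) = 0, i.e. [x, yxx(yyxx)^n]_q = 0. -/
import Mathlib


noncomputable section

/-- The letter `x`. -/
def bX : Bool := false
/-- The letter `y`. -/
def bY : Bool := true

/-- The bilinear pairing on letters: `⟨x,x⟩ = ⟨y,y⟩ = 2`, `⟨x,y⟩ = ⟨y,x⟩ = -2`. -/
def qbr (a b : Bool) : ℤ := if a = b then 2 else -2

/-- The sum `⟨a, w₁⟩ + ⋯ + ⟨a, wₙ⟩` for a letter `a` and a word `w`. -/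
def qE (a : Bool) (w : List Bool) : ℤ := (w.map (qbr a)).sum

/-- Linear map on the free algebra (words-indexed finsupps) given by prepending a letter. -/
def qcons (F : Type*) [Field F] (a : Bool) :
    (List Bool →₀ F) →ₗ[F] (List Bool →₀ F) :=
  Finsupp.lmapDomain F F (List.cons a)

/-- The q-shuffle product of two words, as an element of the free algebra `List Bool →₀ F`.
Defined by the recursion `u ⋆ v = u₁((u₂⋯u_r) ⋆ v) + q^{⟨v₁,u₁⟩+⋯+⟨v₁,u_r⟩} v₁(u ⋆ (v₂⋯v_s))`. -/
def qsh {F : Type*} [Field F] (q : F) : List Bool → List Bool → (List Bool →₀ F)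
  | [], v => Finsupp.single v 1
  | a :: u, [] => Finsupp.single (a :: u) 1
  | a :: u, b :: v =>
      qcons F a (qsh q u (b :: v)) +
        (q ^ (qbr b a + qE b u)) • qcons F b (qsh q (a :: u) v)
  termination_by u v => u.length + v.length
  decreasing_by all_goals (simp only [List.length_cons]; omega)

/-- Concatenation power of a word. -/
def wpow (w : List Bool) : ℕ → List Bool
  | 0 => []
  | n + 1 => w ++ wpow w n

def wXXYY : List Bool := [bX, bX, bY, bY]
def wYYXX : List Bool := [bY, bY, bX, bX]
def wXY : List Bool := [bX, bY]
def wYX : List Bool := [bY, bX]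

section Aux
variable {F : Type*} [Field F]

variable {F : Type*} [Field F]

lemma qsh_nil_left (q : F) (v : List Bool) : qsh q [] v = Finsupp.single v 1 := by
  cases v <;> simp [qsh]

lemma qsh_nil_right (q : F) (v : List Bool) : qsh q v [] = Finsupp.single v 1 := by
  cases v <;> simp [qsh]

lemma qcons_single (a : Bool) (w : List Bool) (c : F) :
    qcons F a (Finsupp.single w c) = Finsupp.single (a :: w) c := by
  simp [qcons, Finsupp.lmapDomain_apply, Finsupp.mapDomain_single]

lemma qE_cons (a b : Bool) (v : List Bool) : qE a (b :: v) = qbr a b + qE a v := by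
  simp [qE]

lemma qbr_comm (a b : Bool) : qbr a b = qbr b a := by
  cases a <;> cases b <;> simp [qbr]

lemma qsh_x_cons (q : F) (b : Bool) (v : List Bool) :
    qsh q [bX] (b :: v) =
      Finsupp.single (bX :: b :: v) 1 + q ^ (qbr bX b) • qcons F b (qsh q [bX] v) := by
  rw [qsh, qsh_nil_left, qcons_single, qbr_comm]
  simp [qE]

lemma qsh_cons_x (q : F) (b : Bool) (v : List Bool) :
    qsh q (b :: v) [bX] =
      qcons F b (qsh q v [bX]) + q ^ (qE bX (b :: v)) • Finsupp.single (bX :: b :: v) 1 := by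
  rw [show ([bX] : List Bool) = bX :: [] from rfl, qsh, qsh_nil_right, qcons_single, qE_cons]
/-- The bracket with shifted exponent. -/
def Aq (q : F) (j : ℤ) (v : List Bool) : List Bool →₀ F :=
  q ^ (1 + j) • qsh q [bX] v - q ^ (1 - j - qE bX v) • qsh q v [bX]

lemma Aq_cons (q : F) (hq : q ≠ 0) (j : ℤ) (b : Bool) (v : List Bool) :
    Aq q j (b :: v) = (q ^ (1 + j) - q ^ (1 - j)) • Finsupp.single (bX :: b :: v) (1 : F)
      + qcons F b (Aq q (j + qbr bX b) v) := by
  unfold Aq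
  rw [qsh_x_cons, qsh_cons_x, qE_cons]
  rw [smul_add, smul_add, smul_smul, smul_smul, ← zpow_add₀ hq, ← zpow_add₀ hq]
  rw [map_sub, map_smul, map_smul]
  rw [show (1 + j) + qbr bX b = 1 + (j + qbr bX b) by ring,
      show (1 - j - (qbr bX b + qE bX v)) + (qbr bX b + qE bX v) = 1 - j by ring,
      show (1 - j - (qbr bX b + qE bX v)) = 1 - (j + qbr bX b) - qE bX v by ring]
  rw [sub_smul]; abel

lemma Aq_nil (q : F) (j : ℤ) :
    Aq q j [] = (q ^ (1 + j) - q ^ (1 - j)) • Finsupp.single [bX] (1 : F) := by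
  unfold Aq
  rw [qsh_nil_left, qsh_nil_right]
  simp [qE, sub_smul]
def Bq (q : F) (v : List Bool) : List Bool →₀ F :=
  Aq q 2 v - (q ^ (3 : ℤ) - q ^ (-1 : ℤ)) • Finsupp.single (bX :: v) (1 : F)

lemma Bq_nil (q : F) : Bq q [] = 0 := by
  unfold Bq
  rw [Aq_nil]
  norm_num

lemma Bq_cons (q : F) (hq : q ≠ 0) (b : Bool) (v : List Bool) :
    Bq q (b :: v) = qcons F b (Aq q (2 + qbr bX b) v) := by
  unfold Bq
  rw [Aq_cons q hq]
  norm_num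

lemma Aq_zero_cons (q : F) (hq : q ≠ 0) (b : Bool) (v : List Bool) :
    Aq q 0 (b :: v) = qcons F b (Aq q (qbr bX b) v) := by
  rw [Aq_cons q hq]
  norm_num

lemma qbr_xx : qbr bX bX = 2 := by simp [qbr]
lemma qbr_xy : qbr bX bY = -2 := by simp [qbr, bX, bY]

lemma Aq_neg2_xx (q : F) (hq : q ≠ 0) (v : List Bool) :
    Aq q (-2) (bX :: bX :: v) = qcons F bX (qcons F bX (Bq q v)) := by
  rw [Aq_cons q hq, qbr_xx, show (-2 : ℤ) + 2 = 0 by ring, Aq_zero_cons q hq, qbr_xx]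
  rw [show Aq q 2 v = Bq q v + (q ^ (3:ℤ) - q ^ (-1:ℤ)) • Finsupp.single (bX :: v) 1 by
        unfold Bq; abel]
  rw [map_add, map_smul, qcons_single, map_add, map_smul, qcons_single]
  rw [show (1 : ℤ) + -2 = -1 by ring, show (1 : ℤ) - -2 = 3 by ring]
  rw [show (q ^ (-1:ℤ) - q ^ (3:ℤ)) = -(q ^ (3:ℤ) - q ^ (-1:ℤ)) by ring, neg_smul]
  abel

lemma main_ind (q : F) (hq : q ≠ 0) (n : ℕ) :
    Aq q 0 ([bY, bX, bX] ++ wpow wYYXX n) = 0 := by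
  induction n with
  | zero =>
      rw [show ([bY, bX, bX] ++ wpow wYYXX 0) = bY :: bX :: bX :: [] by rfl]
      rw [Aq_zero_cons q hq, qbr_xy, show (-2 : ℤ) = -2 by rfl]
      rw [Aq_neg2_xx q hq, Bq_nil]
      simp
  | succ n ih =>
      have hw : ([bY, bX, bX] ++ wpow wYYXX (n+1))
          = bY :: bX :: bX :: bY :: (bY :: bX :: bX :: wpow wYYXX n) := by
        simp [wpow, wYYXX]
      have hw2 : (bY :: bX :: bX :: wpow wYYXX n) = [bY, bX, bX] ++ wpow wYYXX n := by rfl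
      rw [hw, Aq_zero_cons q hq, qbr_xy, Aq_neg2_xx q hq, Bq_cons q hq, qbr_xy,
          show (2 : ℤ) + -2 = 0 by ring, hw2, ih]
      simp
lemma qE_append (a : Bool) (u v : List Bool) : qE a (u ++ v) = qE a u + qE a v := by
  simp [qE]

lemma qE_wpow (n : ℕ) : qE bX (wpow wYYXX n) = 0 := by
  induction n with
  | zero => simp [wpow, qE]
  | succ n ih => rw [wpow, qE_append, ih]; simp [wYYXX, qE, qbr, bX, bY]


end Aux

/-- `[x, yxx(yyxx)^n]_q = 0` in the q-shuffle algebra. -/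
theorem stmt4 {F : Type*} [Field F] [CharZero F] (q : F) (hq : q ≠ 0)
    (hq1 : ∀ m : ℕ, 0 < m → q ^ m ≠ 1) (n : ℕ) :
    q • qsh q [bX] ([bY, bX, bX] ++ wpow wYYXX n)
        - q ^ (-1 : ℤ) • qsh q ([bY, bX, bX] ++ wpow wYYXX n) [bX] = 0 := by
  have h := main_ind q hq n
  unfold Aq at h
  rw [qE_append, qE_wpow, show qE bX [bY, bX, bX] = 2 by simp [qE, qbr, bX, bY]] at h
  norm_num at h
  rw [show q = q ^ (1 : ℤ) by simp]
  convert h using 3 <;> norm_num
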